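/- Let S be a measurable space, let R : S → M±(S) be a measurable map into the finite signed measures on S, and let M₀ be a measurable subset of M*(S) such that for every μ ∈ M₀, one has μ + R_s ∈ M₀ for μ-almost every s ∈ S. For μ ∈ M₀, define R_μ as the pushforward of μ/μ(S) under s ↦ μ + R_s. Then R_μ is a probability measure on M₀ for every μ ∈ M₀, and μ ↦ R_μ is a probability kernel from M₀ to itself. -/
import Mathlib


open MeasureTheory

/-- The σ-algebra on the space `M±(S)` of finite signed measures on `S`,
generated by the evaluation maps `μ ↦ μ B` over measurable sets `B`. -/
instance signedMeasureMeasurableSpace (S : Type*) [MeasurableSpace S] :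
    MeasurableSpace (SignedMeasure S) :=
  ⨆ (B : Set S) (_ : MeasurableSet B),
    MeasurableSpace.comap (fun μ : SignedMeasure S => μ B) inferInstance

/-- The (nonnegative) measure associated to a signed measure `μ`: its positive
part. For `0 ≤ μ` this is just `μ` viewed as a measure. -/
noncomputable def posOf {S : Type*} [MeasurableSpace S] (μ : SignedMeasure S) :
    Measure S :=
  μ.toJordanDecomposition.posPart

/-- The normalized measure `μ / μ(S)` associated to a nonnegative signed measure. -/
noncomputable def drawDist {S : Type*} [MeasurableSpace S] (μ : SignedMeasure S) :
    Measure S :=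
  ((posOf μ) Set.univ)⁻¹ • posOf μ

section Aux

variable {S : Type*} [MeasurableSpace S]

/-- Evaluation at a measurable set is measurable on `SignedMeasure S`. -/
lemma measurable_eval_sm {B : Set S} (hB : MeasurableSet B) :
    Measurable (fun μ : SignedMeasure S => μ B) := by
  apply Measurable.of_comap_le
  exact le_iSup₂ (f := fun (B : Set S) (_ : MeasurableSet B) =>
    MeasurableSpace.comap (fun μ : SignedMeasure S => μ B) inferInstance) B hB

/-- A map into `SignedMeasure S` is measurable iff all evaluations are. -/
lemma measurable_into_sm {α : Type*} [MeasurableSpace α] {g : α → SignedMeasure S}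
    (h : ∀ B : Set S, MeasurableSet B → Measurable fun x => g x B) : Measurable g := by
  rw [measurable_iff_comap_le]
  show MeasurableSpace.comap g (⨆ (B : Set S) (_ : MeasurableSet B),
    MeasurableSpace.comap (fun μ : SignedMeasure S => μ B) inferInstance) ≤ _
  rw [MeasurableSpace.comap_iSup]
  refine iSup_le fun B => ?_
  rw [MeasurableSpace.comap_iSup]
  refine iSup_le fun hB => ?_
  rw [MeasurableSpace.comap_comp]
  exact (h B hB).comap_le

/-- For a nonnegative signed measure, the positive part of its Jordan
decomposition evaluates to `ENNReal.ofReal (μ B)`. -/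
lemma posOf_apply_of_nonneg {μ : SignedMeasure S} (hμ : 0 ≤ μ) {B : Set S}
    (hB : MeasurableSet B) : posOf μ B = ENNReal.ofReal (μ B) := by
  obtain ⟨i, hi₁, hi₂, hi₃, hpos, -⟩ := μ.toJordanDecomposition_spec
  rw [posOf, hpos, SignedMeasure.toMeasureOfZeroLE_apply _ hi₂ hi₁ hB]
  have hcompl : μ (iᶜ ∩ B) = 0 := by
    have hle : μ (iᶜ ∩ B) ≤ 0 :=
      VectorMeasure.nonpos_of_restrict_le_zero _
        (VectorMeasure.restrict_le_zero_subset _ hi₁.compl Set.inter_subset_left hi₃)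
    have hge : (0 : SignedMeasure S) (iᶜ ∩ B) ≤ μ (iᶜ ∩ B) :=
      hμ _ (hi₁.compl.inter hB)
    simp only [VectorMeasure.zero_apply] at hge
    linarith
  have hsplit : μ B = μ (i ∩ B) := by
    have : μ ((i ∩ B) ∪ (iᶜ ∩ B)) = μ (i ∩ B) + μ (iᶜ ∩ B) :=
      VectorMeasure.of_union
        ((disjoint_compl_right.inf_left _).inf_right _) (hi₁.inter hB) (hi₁.compl.inter hB)
    rw [show i ∩ B ∪ iᶜ ∩ B = B by rw [← Set.union_inter_distrib_right, Set.union_compl_self, Set.univ_inter]] at this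
    rw [this, hcompl, add_zero]
  rw [hsplit, ENNReal.ofReal_eq_coe_nnreal]

/-- A nonnegative nonzero signed measure has positive total mass. -/
lemma totalMass_pos {μ : SignedMeasure S} (hμ : 0 ≤ μ) (hne : μ ≠ 0) :
    0 < μ Set.univ := by
  rcases lt_or_eq_of_le (by simpa using hμ Set.univ MeasurableSet.univ :
    (0:ℝ) ≤ μ Set.univ) with h | h
  · exact h
  exfalso
  apply hne
  ext B hB
  have hle : μ B ≤ μ Set.univ := by
    have : μ (B ∪ Bᶜ) = μ B + μ Bᶜ :=
      VectorMeasure.of_union disjoint_compl_right hB hB.compl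
    rw [Set.union_compl_self] at this
    have h2 : (0:ℝ) ≤ μ Bᶜ := by simpa using hμ Bᶜ hB.compl
    linarith
  have hge : (0:ℝ) ≤ μ B := by simpa using hμ B hB
  simp only [VectorMeasure.zero_apply]
  linarith

lemma isProbabilityMeasure_drawDist {μ : SignedMeasure S} (hμ : 0 ≤ μ) (hne : μ ≠ 0) :
    IsProbabilityMeasure (drawDist μ) := by
  have hval : posOf μ Set.univ = ENNReal.ofReal (μ Set.univ) :=
    posOf_apply_of_nonneg hμ MeasurableSet.univ
  have h0 : posOf μ Set.univ ≠ 0 := by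
    rw [hval]
    simpa using totalMass_pos hμ hne
  have htop : posOf μ Set.univ ≠ ⊤ := by rw [hval]; exact ENNReal.ofReal_ne_top
  constructor
  rw [drawDist, Measure.smul_apply, smul_eq_mul]
  exact ENNReal.inv_mul_cancel h0 htop

end Aux

open ProbabilityTheory

/-- let `S` be a measurable space, `R : S → M±(S)` a measurable map
into the finite signed measures, and `M₀` a measurable subset of `M*(S)` (the
nonzero nonnegative finite measures, viewed inside `M±(S)`) such that for every
`μ ∈ M₀` one has `μ + R_s ∈ M₀` for `μ`-almost every `s`. For `μ ∈ M₀`, let `R_μ`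
be the pushforward of `μ / μ(S)` under `s ↦ μ + R_s`, viewed (via restriction to
`M₀`) as a measure on `M₀`. Then `R_μ` is a probability measure on `M₀` for every
`μ ∈ M₀`, and `μ ↦ R_μ` is measurable, i.e. it is a probability kernel from `M₀`
to itself. -/
theorem urn_with_removals_isProbabilityKernel (S : Type*) [MeasurableSpace S]
    (R : S → SignedMeasure S) (hR : Measurable R)
    (M₀ : Set (SignedMeasure S)) (hM₀ : MeasurableSet M₀)
    (hsub : ∀ μ ∈ M₀, 0 ≤ μ ∧ μ ≠ 0)
    (hclosed : ∀ μ ∈ M₀, ∀ᵐ s ∂(posOf μ), μ + R s ∈ M₀) :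
    (∀ μ : M₀, IsProbabilityMeasure
        (Measure.comap (Subtype.val : M₀ → SignedMeasure S)
          (Measure.map (fun s => μ.1 + R s) (drawDist μ.1)))) ∧
    Measurable (fun μ : M₀ =>
        Measure.comap (Subtype.val : M₀ → SignedMeasure S)
          (Measure.map (fun s => μ.1 + R s) (drawDist μ.1))) := by
  have emb : MeasurableEmbedding (Subtype.val : M₀ → SignedMeasure S) :=
    MeasurableEmbedding.subtype_coe hM₀
  -- measurability of the single-variable maps
  have hg : ∀ μ : M₀, Measurable (fun s => μ.1 + R s) := by
    intro μ
    apply measurable_into_sm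
    intro B hB
    simp only [VectorMeasure.add_apply]
    exact measurable_const.add ((measurable_eval_sm hB).comp hR)
  -- drawDist is a probability measure for μ ∈ M₀
  have hprob : ∀ μ : M₀, IsProbabilityMeasure (drawDist μ.1) := fun μ =>
    isProbabilityMeasure_drawDist (hsub μ.1 μ.2).1 (hsub μ.1 μ.2).2
  -- a.e. closedness for drawDist
  have hae : ∀ μ : M₀, ∀ᵐ s ∂(drawDist μ.1), μ.1 + R s ∈ M₀ := fun μ =>
    Measure.ae_smul_measure (hclosed μ.1 μ.2) _
  have hfull : ∀ μ : M₀, drawDist μ.1 ((fun s => μ.1 + R s) ⁻¹' M₀) = 1 := by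
    intro μ
    have := hprob μ
    rw [← measure_univ (μ := drawDist μ.1)]
    exact measure_congr (Filter.eventuallyEq_univ.mpr (hae μ))
  constructor
  · intro μ
    constructor
    rw [Measure.comap_apply _ emb.injective (fun s hs => emb.measurableSet_image.mpr hs) _
      MeasurableSet.univ, Set.image_univ, Subtype.range_coe,
      Measure.map_apply (hg μ) hM₀]
    exact hfull μ
  · rw [Measure.measurable_measure]
    intro A hA
    have hAim : MeasurableSet (Subtype.val '' A) := emb.measurableSet_image.mpr hA
    -- rewrite the function as a kernel evaluation on sections
    have hκmeas : Measurable (fun μ : M₀ => drawDist μ.1) := by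
      rw [Measure.measurable_measure]
      intro B hB
      have hpt : ∀ μ : M₀, drawDist μ.1 B =
          (ENNReal.ofReal (μ.1 Set.univ))⁻¹ * ENNReal.ofReal (μ.1 B) := by
        intro μ
        rw [drawDist, Measure.smul_apply, smul_eq_mul,
          posOf_apply_of_nonneg (hsub μ.1 μ.2).1 hB,
          posOf_apply_of_nonneg (hsub μ.1 μ.2).1 MeasurableSet.univ]
      simp only [hpt]
      exact (ENNReal.measurable_ofReal.comp
          ((measurable_eval_sm MeasurableSet.univ).comp measurable_subtype_coe)).inv.mul
        (ENNReal.measurable_ofReal.comp ((measurable_eval_sm hB).comp measurable_subtype_coe))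
    let κ : Kernel M₀ S := ⟨fun μ : M₀ => drawDist μ.1, hκmeas⟩
    have : IsMarkovKernel κ := ⟨fun μ => hprob μ⟩
    have hF : Measurable (fun p : M₀ × S => p.1.1 + R p.2) := by
      apply measurable_into_sm
      intro B hB
      simp only [VectorMeasure.add_apply]
      exact (((measurable_eval_sm hB).comp measurable_subtype_coe).comp measurable_fst).add
        (((measurable_eval_sm hB).comp hR).comp measurable_snd)
    have ht : MeasurableSet ((fun p : M₀ × S => p.1.1 + R p.2) ⁻¹' (Subtype.val '' A)) :=
      hF hAim
    have key : (fun μ : M₀ => Measure.comap (Subtype.val : M₀ → SignedMeasure S)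
        (Measure.map (fun s => μ.1 + R s) (drawDist μ.1)) A) =
        fun μ : M₀ => κ μ (Prod.mk μ ⁻¹'
          ((fun p : M₀ × S => p.1.1 + R p.2) ⁻¹' (Subtype.val '' A))) := by
      funext μ
      rw [Measure.comap_apply _ emb.injective (fun s hs => emb.measurableSet_image.mpr hs) _ hA,
        Measure.map_apply (hg μ) hAim]
      rfl
    rw [key]
    exact Kernel.measurable_kernel_prodMk_left ht
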